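/- Let λ be a Perron number whose degree [ℚ(λ):ℚ] is odd. Then for every positive integer k, ℚ(λ + λ⁻¹) = ℚ(λᵏ + λ⁻ᵏ); moreover these fields all equal ℚ(λ). -/

import Mathlib

open Polynomial

/-- The Galois conjugates of a real algebraic number: the complex roots of its
minimal polynomial over `ℚ`. -/
def galoisConjugates (x : ℝ) : Set ℂ :=
  {z : ℂ | Polynomial.aeval z (minpoly ℚ x) = 0}

/-- A Perron number: a real algebraic integer `l > 1` all of whose Galois conjugates
other than `l` itself have modulus strictly less than `l`. -/
def IsPerron (l : ℝ) : Prop :=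
  1 < l ∧ IsIntegral ℤ l ∧
    ∀ z : ℂ, z ∈ galoisConjugates l → z ≠ (l : ℂ) → ‖z‖ < l

/-!
Put `t = λᵏ + λ⁻ᵏ ∈ ℚ(λ)`. The number `λᵏ` is a root of `X² - tX + 1`, and its degree over
`ℚ(t)` divides the odd degree `[ℚ(λ) : ℚ]`, so `λᵏ ∈ ℚ(t)`. Every conjugate `z` of `λ` over `ℚ(t)`
is then a conjugate over `ℚ` with `zᵏ = λᵏ`, hence `|z| = λ`, and the Perron property forces
`z = λ`. Being separable over `ℚ(t)` with a single conjugate, `λ` lies in `ℚ(t)`.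
-/

open IntermediateField Module

theorem Polynomial.Separable.natDegree_le_one_of_eval₂_eq {F Ω : Type*} [Field F] [Field Ω]
    [IsAlgClosed Ω] {p : F[X]} (hp : p.Separable) (φ : F →+* Ω) (a : Ω)
    (h : ∀ z, eval₂ φ z p = 0 → z = a) : p.natDegree ≤ 1 := by
  have hsub : (p.map φ).roots ≤ {a} := by
    refine (Multiset.le_iff_subset (nodup_roots hp.map)).mpr fun z hz => ?_
    rw [Multiset.mem_singleton, ← h z ((mem_roots_map_of_injective φ.injective hp.ne_zero).mp hz)]
  simpa [IsAlgClosed.card_roots_map_eq_natDegree_from_simpleRing] using Multiset.card_le_card hsub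

namespace IntermediateField

variable {k E : Type*} [Field k] [Field E] [Algebra k E]

theorem mem_of_natDegree_minpoly_le_one {A : IntermediateField k E} {x : E}
    (hx : IsIntegral A x) (h : (minpoly A x).natDegree ≤ 1) : x ∈ A := by
  obtain ⟨a, rfl⟩ := minpoly.natDegree_eq_one_iff.mp (h.antisymm (minpoly.natDegree_pos hx))
  exact a.2

theorem natDegree_minpoly_dvd_finrank {A B : IntermediateField k E} (hAB : A ≤ B)
    [FiniteDimensional k B] {x : E} (hx : x ∈ B) : (minpoly A x).natDegree ∣ finrank k B := by
  have hint : IsIntegral A x := (isIntegral_iff.mp (IsIntegral.of_finite k (⟨x, hx⟩ : B))).tower_top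
  calc (minpoly A x).natDegree = (minpoly A (⟨x, hx⟩ : extendScalars hAB)).natDegree := by
        rw [minpoly_eq]
    _ ∣ finrank A (extendScalars hAB) := minpoly.degree_dvd (isIntegral_iff.mpr hint)
    _ = relfinrank A B := (relfinrank_eq_finrank_of_le hAB).symm
    _ ∣ finrank k B := relfinrank_dvd_finrank_bot A B

theorem mem_adjoin_add_inv_of_odd_finrank {B : IntermediateField k E} [FiniteDimensional k B]
    (hodd : Odd (finrank k B)) {u : E} (hu : u ∈ B) : u ∈ k⟮u + u⁻¹⟯ := by
  rcases eq_or_ne u 0 with rfl | hu0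
  · exact zero_mem _
  set A := k⟮u + u⁻¹⟯
  have hAB : A ≤ B := adjoin_simple_le_iff.mpr (add_mem hu (inv_mem hu))
  set p : A[X] := X ^ 2 - C ⟨u + u⁻¹, mem_adjoin_simple_self k _⟩ * X + 1
  have hp : p.natDegree = 2 := by unfold p; compute_degree!
  have hpu : aeval u p = 0 := by
    simp only [p, map_add, map_sub, map_mul, map_pow, aeval_X, aeval_C, map_one, algebraMap_apply]
    field_simp
    ring
  have hint : IsIntegral A u := (isIntegral_iff.mp (IsIntegral.of_finite k (⟨u, hu⟩ : B))).tower_top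
  have hle : (minpoly A u).natDegree ≤ 2 :=
    hp ▸ natDegree_le_of_dvd (minpoly.dvd A u hpu) (ne_zero_of_natDegree_gt (hp ▸ two_pos))
  have hne : (minpoly A u).natDegree ≠ 2 :=
    hodd.ne_two_of_dvd_nat (natDegree_minpoly_dvd_finrank hAB hu)
  exact mem_of_natDegree_minpoly_le_one hint (by omega)

end IntermediateField

theorem IsPerron.eq_of_pow_eq {l : ℝ} (hl : IsPerron l) {z : ℂ} (hz : z ∈ galoisConjugates l)
    {k : ℕ} (hk : k ≠ 0) (hzk : z ^ k = (l : ℂ) ^ k) : z = l := by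
  obtain ⟨hl1, -, hconj⟩ := hl
  by_contra hne
  have hlt : ‖z‖ ^ k < l ^ k := pow_lt_pow_left₀ (hconj z hz hne) (norm_nonneg z) hk
  have heq : ‖z‖ ^ k = l ^ k := by
    rw [← norm_pow, hzk, norm_pow, Complex.norm_real,
      Real.norm_of_nonneg (zero_le_one.trans hl1.le)]
  exact hlt.ne heq

theorem IsPerron.mem_of_pow_mem {l : ℝ} (hl : IsPerron l) {A : IntermediateField ℚ ℝ} {k : ℕ}
    (hk : k ≠ 0) (h : l ^ k ∈ A) : l ∈ A := by
  have hint : IsIntegral A l := (hl.2.1.tower_top (A := ℚ)).tower_top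
  let φ : A →+* ℂ := (algebraMap ℝ ℂ).comp (algebraMap A ℝ)
  have hroot {p : A[X]} (hp : aeval l p = 0) {z : ℂ} (hz : eval₂ φ z (minpoly A l) = 0) :
      eval₂ φ z p = 0 :=
    eval₂_eq_zero_of_dvd_of_eval₂_eq_zero _ _ (minpoly.dvd A l hp) hz
  refine mem_of_natDegree_minpoly_le_one hint
    ((minpoly.irreducible hint).separable.natDegree_le_one_of_eval₂_eq φ l fun z hz => ?_)
  refine hl.eq_of_pow_eq ?_ hk ?_
  · have := hroot (p := (minpoly ℚ l).map (algebraMap ℚ A)) (by simp) hz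
    rwa [eval₂_map, Subsingleton.elim (φ.comp _) (algebraMap ℚ ℂ)] at this
  · have := hroot (p := X ^ k - C ⟨l ^ k, h⟩) (by simp) hz
    simpa [φ, sub_eq_zero] using this

theorem IsPerron.adjoin_pow_add_inv_eq {l : ℝ} (hl : IsPerron l)
    (hodd : Odd (minpoly ℚ l).natDegree) {k : ℕ} (hk : k ≠ 0) :
    ℚ⟮l ^ k + (l ^ k)⁻¹⟯ = ℚ⟮l⟯ := by
  have hint : IsIntegral ℚ l := hl.2.1.tower_top
  have : FiniteDimensional ℚ ℚ⟮l⟯ := adjoin.finiteDimensional hint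
  have hpow : l ^ k ∈ ℚ⟮l⟯ := pow_mem (mem_adjoin_simple_self ℚ l) k
  refine le_antisymm (adjoin_simple_le_iff.mpr (add_mem hpow (inv_mem hpow))) ?_
  refine adjoin_simple_le_iff.mpr (hl.mem_of_pow_mem hk ?_)
  exact mem_adjoin_add_inv_of_odd_finrank ((adjoin.finrank hint).symm ▸ hodd) hpow

theorem perron_traces_odd_degree (l : ℝ) (hl : IsPerron l)
    (hodd : Odd (minpoly ℚ l).natDegree) :
    ∀ k : ℕ, 0 < k →
      IntermediateField.adjoin ℚ {l + l⁻¹} =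
        IntermediateField.adjoin ℚ {l ^ k + (l ^ k)⁻¹} ∧
      IntermediateField.adjoin ℚ {l ^ k + (l ^ k)⁻¹} =
        IntermediateField.adjoin ℚ {l} := by
  intro k hk
  have hk_eq := hl.adjoin_pow_add_inv_eq hodd hk.ne'
  have h1_eq : ℚ⟮l + l⁻¹⟯ = ℚ⟮l⟯ := by simpa using hl.adjoin_pow_add_inv_eq hodd one_ne_zero
  exact ⟨h1_eq.trans hk_eq.symm, hk_eq⟩
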